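/- arXiv:1309.5522 — 3 statements merged into one kernel-verified Lean document; each statement's English description precedes it below -/
import Mathlib

section
/- If three forward zones of a history overlap at a common point in time, then the history is not 2-atomic. -/
/-
Fix a valid `k`-atomic total order. If a forward zone contains `t`, its cluster has an operation
finishing by `t`, which is the write or comes after it, and a read starting at or after `t` (not
the write itself, which starts before every finish time in its cluster). As endpoints are
distinct, a valid order puts every operation finishing by `t` before every operation starting at
or after `t`. So each write of the overlapping clusters precedes the late reads of all of them,
and the first of these writes has all the others strictly between itself and its own late read:
with `k + 1` overlapping zones that is `k` writes, one more than `k`-atomicity allows.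
-/

open scoped Classical

/-- An operation on a single register. -/
structure Op where
  s : ℝ
  f : ℝ
  isRead : Bool
  val : ℕ

abbrev History := Finset Op

def Op.isWrite (op : Op) : Prop := op.isRead = false

/-- Well-formedness of a history: operations have positive duration, all endpoints
are distinct, writes have distinct values, and every read has a dictating write
that finishes before the read starts. -/
def Wf (H : History) : Prop :=
  (∀ op ∈ H, op.s < op.f) ∧
  (∀ op1 ∈ H, ∀ op2 ∈ H, op1 ≠ op2 →
    op1.s ≠ op2.s ∧ op1.f ≠ op2.f ∧ op1.s ≠ op2.f) ∧
  (∀ w1 ∈ H, ∀ w2 ∈ H, w1.isWrite → w2.isWrite → w1.val = w2.val → w1 = w2) ∧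
  (∀ r ∈ H, r.isRead = true → ∃ w ∈ H, w.isWrite ∧ w.val = r.val ∧ w.f < r.s)

/-- `a` occurs before `b` in the total order represented by the list `l`. -/
def Before (l : List Op) (a b : Op) : Prop :=
  ∃ l1 l2 l3, l = l1 ++ a :: l2 ++ b :: l3

/-- A total order (list) is valid if it respects real-time precedence. -/
def Valid (l : List Op) : Prop :=
  ∀ a ∈ l, ∀ b ∈ l, a.f < b.s → Before l a b

/-- `l` is a total order on exactly the operations of `H`. -/
def IsLinearization (H : History) (l : List Op) : Prop :=
  l.Nodup ∧ ∀ op, op ∈ l ↔ op ∈ H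

/-- In the total order `l`, every read follows its dictating write, separated from
it by at most `k - 1` other writes. -/
def KAtomicOrder (k : ℕ) (l : List Op) : Prop :=
  ∀ r ∈ l, r.isRead = true → ∀ w ∈ l, w.isWrite → w.val = r.val →
    ∃ l1 l2 l3, l = l1 ++ w :: l2 ++ r :: l3 ∧
      (l2.filter (fun op => op.isRead = false)).length ≤ k - 1

/-- A history is `k`-atomic if it has a valid `k`-atomic total order. -/
def KAtomic (k : ℕ) (H : History) : Prop :=
  ∃ l, IsLinearization H l ∧ Valid l ∧ KAtomicOrder k l

/-- The cluster of a write `w`: the write together with its dictated reads. -/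
noncomputable def cluster (H : History) (w : Op) : Finset Op :=
  insert w (H.filter (fun r => r.isRead = true ∧ r.val = w.val))

/-- Minimum finish time over the cluster of `w`. -/
noncomputable def fmin (H : History) (w : Op) : ℝ :=
  (cluster H w).inf' (Finset.insert_nonempty _ _) Op.f

/-- Maximum start time over the cluster of `w`. -/
noncomputable def smax (H : History) (w : Op) : ℝ :=
  (cluster H w).sup' (Finset.insert_nonempty _ _) Op.s

/-- The zone of `w`'s cluster is forward if its minimum finish time is less than
its maximum start time. -/
def ForwardZone (H : History) (w : Op) : Prop := fmin H w < smax H w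

/-- Low endpoint of the zone of `w`'s cluster. -/
noncomputable def zoneL (H : History) (w : Op) : ℝ := min (fmin H w) (smax H w)

/-- High endpoint of the zone of `w`'s cluster. -/
noncomputable def zoneH (H : History) (w : Op) : ℝ := max (fmin H w) (smax H w)

/-- The zone of `w`'s cluster, as a closed interval of time. -/
noncomputable def zone (H : History) (w : Op) : Set ℝ := Set.Icc (zoneL H w) (zoneH H w)

namespace List

variable {α : Type*} [DecidableEq α] {l₁ l₂ l₃ : List α} {a b x : α}

theorem idxOf_append_lt_length_iff : (l₁ ++ l₂).idxOf x < l₁.length ↔ x ∈ l₁ := by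
  rw [idxOf_append]
  split_ifs with h <;> simp [h, idxOf_lt_length_iff]

theorem idxOf_append_cons_self (h : a ∉ l₁) : (l₁ ++ a :: l₂).idxOf a = l₁.length := by
  simp [idxOf_append_of_notMem h]

theorem Nodup.idxOf_left (hn : (l₁ ++ a :: l₂ ++ b :: l₃).Nodup) :
    (l₁ ++ a :: l₂ ++ b :: l₃).idxOf a = l₁.length := by
  simp only [append_assoc, cons_append] at hn ⊢
  exact idxOf_append_cons_self fun h => (nodup_middle.1 hn).notMem (mem_append_left _ h)

theorem Nodup.idxOf_right (hn : (l₁ ++ a :: l₂ ++ b :: l₃).Nodup) :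
    (l₁ ++ a :: l₂ ++ b :: l₃).idxOf b = (l₁ ++ a :: l₂).length :=
  idxOf_append_cons_self fun h => (nodup_middle.1 hn).notMem (mem_append_left _ h)

theorem Nodup.mem_of_idxOf_between (hn : (l₁ ++ a :: l₂ ++ b :: l₃).Nodup)
    (hax : (l₁ ++ a :: l₂ ++ b :: l₃).idxOf a < (l₁ ++ a :: l₂ ++ b :: l₃).idxOf x)
    (hxb : (l₁ ++ a :: l₂ ++ b :: l₃).idxOf x < (l₁ ++ a :: l₂ ++ b :: l₃).idxOf b) :
    x ∈ l₂ := by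
  rw [hn.idxOf_right, idxOf_append_lt_length_iff, mem_append] at hxb
  rw [hn.idxOf_left] at hax
  rcases hxb with hx | hx
  · have : (l₁ ++ a :: l₂ ++ b :: l₃).idxOf x < l₁.length := by
      rw [append_assoc]; exact idxOf_append_lt_length_iff.2 hx
    omega
  · rcases mem_cons.1 hx with rfl | hx
    · rw [hn.idxOf_left] at hax; omega
    · exact hx

end List

theorem Before.idxOf_lt {l : List Op} {a b : Op} (h : Before l a b) (hn : l.Nodup) :
    l.idxOf a < l.idxOf b := by
  obtain ⟨l₁, l₂, l₃, rfl⟩ := h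
  rw [hn.idxOf_left, hn.idxOf_right]
  simp

theorem Valid.idxOf_lt {l : List Op} {a b : Op} (hval : Valid l) (hn : l.Nodup) (ha : a ∈ l)
    (hb : b ∈ l) (h : a.f < b.s) : l.idxOf a < l.idxOf b :=
  (hval a ha b hb h).idxOf_lt hn

namespace KAtomicOrder

variable {k : ℕ} {l : List Op} {w r : Op}

theorem idxOf_lt (hka : KAtomicOrder k l) (hn : l.Nodup) (hw : w ∈ l) (hww : w.isWrite)
    (hr : r ∈ l) (hrr : r.isRead = true) (hv : w.val = r.val) : l.idxOf w < l.idxOf r := by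
  obtain ⟨l₁, l₂, l₃, hl, -⟩ := hka r hr hrr w hw hww hv
  exact Before.idxOf_lt ⟨l₁, l₂, l₃, hl⟩ hn

theorem card_le_of_between (hka : KAtomicOrder k l) (hn : l.Nodup) (hw : w ∈ l)
    (hww : w.isWrite) (hr : r ∈ l) (hrr : r.isRead = true) (hv : w.val = r.val) {S : Finset Op}
    (hSw : ∀ x ∈ S, x.isWrite)
    (hS : ∀ x ∈ S, l.idxOf w < l.idxOf x ∧ l.idxOf x < l.idxOf r) : S.card ≤ k - 1 := by
  obtain ⟨l₁, l₂, l₃, rfl, hlen⟩ := hka r hr hrr w hw hww hv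
  calc S.card ≤ (l₂.filter fun op => op.isRead = false).toFinset.card := by
        refine Finset.card_le_card fun x hx => ?_
        simpa [hn.mem_of_idxOf_between (hS x hx).1 (hS x hx).2, Op.isWrite] using hSw x hx
    _ ≤ _ := List.toFinset_card_le _
    _ ≤ k - 1 := hlen

end KAtomicOrder

section Zones

variable {H : History} {w a b r : Op} {t : ℝ}

theorem mem_cluster_iff :
    a ∈ cluster H w ↔ a = w ∨ a ∈ H ∧ a.isRead = true ∧ a.val = w.val := by
  simp [cluster]

theorem cluster_subset (hw : w ∈ H) : cluster H w ⊆ H := fun a ha => by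
  rcases mem_cluster_iff.1 ha with rfl | ⟨ha, -⟩
  exacts [hw, ha]

theorem ForwardZone.mem_zone_iff (hfz : ForwardZone H w) :
    t ∈ zone H w ↔ fmin H w ≤ t ∧ t ≤ smax H w := by
  rw [zone, zoneL, zoneH, min_eq_left hfz.le, max_eq_right hfz.le, Set.mem_Icc]

theorem ForwardZone.exists_mem_cluster_f_le (hfz : ForwardZone H w) (ht : t ∈ zone H w) :
    ∃ a ∈ cluster H w, a.f ≤ t :=
  (Finset.inf'_le_iff _).1 (hfz.mem_zone_iff.1 ht).1

namespace Wf

theorem f_lt_s_of_dictates (hWf : Wf H) (hw : w ∈ H) (hww : w.isWrite) (hr : r ∈ H)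
    (hrr : r.isRead = true) (hv : r.val = w.val) : w.f < r.s := by
  obtain ⟨w', hw', hw'w, hv', hlt⟩ := hWf.2.2.2 r hr hrr
  rwa [hWf.2.2.1 w' hw' w hw hw'w hww (hv'.trans hv)] at hlt

theorem s_lt_fmin (hWf : Wf H) (hw : w ∈ H) (hww : w.isWrite) : w.s < fmin H w := by
  refine (Finset.lt_inf'_iff _).2 fun a ha => ?_
  rcases mem_cluster_iff.1 ha with rfl | ⟨ha, har, hv⟩
  · exact hWf.1 a hw
  · linarith [hWf.1 w hw, hWf.1 a ha, hWf.f_lt_s_of_dictates hw hww ha har hv]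

theorem f_lt_s_of_f_le_s (hWf : Wf H) (ha : a ∈ H) (hb : b ∈ H) (h : a.f ≤ b.s) :
    a.f < b.s := by
  refine h.lt_of_ne fun heq => ?_
  have hab : a ≠ b := by rintro rfl; linarith [hWf.1 a ha]
  exact (hWf.2.1 b hb a ha hab.symm).2.2 heq.symm

theorem exists_read_of_mem_zone (hWf : Wf H) (hw : w ∈ H) (hww : w.isWrite)
    (hfz : ForwardZone H w) (ht : t ∈ zone H w) :
    ∃ r ∈ H, r.isRead = true ∧ r.val = w.val ∧ t ≤ r.s := by
  obtain ⟨hft, hts⟩ := hfz.mem_zone_iff.1 ht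
  obtain ⟨b, hb, htb⟩ := (Finset.le_sup'_iff _).1 hts
  rcases mem_cluster_iff.1 hb with rfl | ⟨hb, hbr, hv⟩
  · exact absurd ((hWf.s_lt_fmin hw hww).trans_le hft) htb.not_gt
  · exact ⟨b, hb, hbr, hv, htb⟩

end Wf

end Zones

section Linearization

variable {H : History} {l : List Op} {k : ℕ} {w r : Op} {t : ℝ}

theorem KAtomicOrder.idxOf_le_of_mem_cluster (hka : KAtomicOrder k l)
    (hl : IsLinearization H l) (hw : w ∈ H) (hww : w.isWrite) {a : Op} (ha : a ∈ cluster H w) :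
    l.idxOf w ≤ l.idxOf a := by
  rcases mem_cluster_iff.1 ha with rfl | ⟨ha, har, hv⟩
  · exact le_rfl
  · exact (hka.idxOf_lt hl.1 ((hl.2 w).2 hw) hww ((hl.2 a).2 ha) har hv.symm).le

theorem idxOf_lt_of_mem_zone (hWf : Wf H) (hl : IsLinearization H l) (hval : Valid l)
    (hka : KAtomicOrder k l) (hw : w ∈ H) (hww : w.isWrite) (hfz : ForwardZone H w)
    (ht : t ∈ zone H w) (hr : r ∈ H) (htr : t ≤ r.s) : l.idxOf w < l.idxOf r := by
  obtain ⟨a, ha, hat⟩ := hfz.exists_mem_cluster_f_le ht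
  have haH := cluster_subset hw ha
  calc l.idxOf w ≤ l.idxOf a := hka.idxOf_le_of_mem_cluster hl hw hww ha
    _ < l.idxOf r := hval.idxOf_lt hl.1 ((hl.2 a).2 haH) ((hl.2 r).2 hr)
        (hWf.f_lt_s_of_f_le_s haH hr (hat.trans htr))

end Linearization

-- `k - 1` is truncated, so `KAtomic 0` means `KAtomic 1`: hence `0 < k`.
theorem not_kAtomic_of_forwardZone_overlap {H : History} (hWf : Wf H) {S : Finset Op}
    (hSH : S ⊆ H) (hSw : ∀ w ∈ S, w.isWrite) (hSf : ∀ w ∈ S, ForwardZone H w) {t : ℝ}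
    (ht : ∀ w ∈ S, t ∈ zone H w) {k : ℕ} (hk : 0 < k) (hkS : k < S.card) : ¬ KAtomic k H := by
  rintro ⟨l, hl, hval, hka⟩
  have hSl : ∀ w ∈ S, w ∈ l := fun w hw => (hl.2 w).2 (hSH hw)
  obtain ⟨w₀, hw₀, hmin⟩ := S.exists_min_image l.idxOf (Finset.card_pos.1 (by omega))
  obtain ⟨r, hr, hrr, hv, htr⟩ :=
    hWf.exists_read_of_mem_zone (hSH hw₀) (hSw w₀ hw₀) (hSf w₀ hw₀) (ht w₀ hw₀)
  have hbetween : ∀ w ∈ S.erase w₀, l.idxOf w₀ < l.idxOf w ∧ l.idxOf w < l.idxOf r := by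
    intro w hw
    obtain ⟨hne, hw⟩ := Finset.mem_erase.1 hw
    refine ⟨(hmin w hw).lt_of_ne fun h => hne ((List.idxOf_inj (hSl w₀ hw₀)).1 h).symm, ?_⟩
    exact idxOf_lt_of_mem_zone hWf hl hval hka (hSH hw) (hSw w hw) (hSf w hw) (ht w hw) hr htr
  have hcard := hka.card_le_of_between hl.1 (hSl w₀ hw₀) (hSw w₀ hw₀) ((hl.2 r).2 hr) hrr hv.symm
    (fun w hw => hSw w (Finset.mem_of_mem_erase hw)) hbetween
  rw [Finset.card_erase_of_mem hw₀] at hcard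
  omega

/-- If three forward zones of a history overlap at a common point in time, then
the history is not 2-atomic. -/
theorem stmt_0 (H : History) (hWf : Wf H)
    (w1 w2 w3 : Op) (h1 : w1 ∈ H) (h2 : w2 ∈ H) (h3 : w3 ∈ H)
    (hw1 : w1.isWrite) (hw2 : w2.isWrite) (hw3 : w3.isWrite)
    (h12 : w1 ≠ w2) (h13 : w1 ≠ w3) (h23 : w2 ≠ w3)
    (hf1 : ForwardZone H w1) (hf2 : ForwardZone H w2) (hf3 : ForwardZone H w3)
    (t : ℝ) (ht1 : t ∈ zone H w1) (ht2 : t ∈ zone H w2) (ht3 : t ∈ zone H w3) :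
    ¬ KAtomic 2 H := by
  refine not_kAtomic_of_forwardZone_overlap hWf (S := {w1, w2, w3}) (t := t) ?_ ?_ ?_ ?_
    two_pos ?_
  · simp [Finset.insert_subset_iff, h1, h2, h3]
  · simp [hw1, hw2, hw3]
  · simp [hf1, hf2, hf3]
  · simp [ht1, ht2, ht3]
  · rw [Finset.card_eq_three.2 ⟨w1, w2, w3, h12, h13, h23, rfl⟩]
    norm_num
end

section
/- A history H is 2-atomic if and only if for every maximal chunk K in the chunk set CS(H), the projection H|K of H onto K is 2-atomic. -/
/-!
Restricting a valid 2-atomic order of `H` to a subhistory keeps it valid and 2-atomic.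
Conversely, two maximal chunks whose intervals meet coincide: the interval of one is connected,
and by maximality of the other no forward zone of the first can leave its interval. Every
operation outside all chunks is a write whose cluster is backward and consists of the write
alone. Concatenating the given orders of the chunk projections and these lone writes, sorted by
the left ends of their zones, respects real-time precedence, and it is 2-atomic because every
read lies in the same piece as its dictating write.
-/

open scoped Classical

/-- Union of the forward zones of the clusters (identified by their dictating
writes) in `K`. -/
def fwdUnion (H : History) (K : Finset Op) : Set ℝ :=
  ⋃ w ∈ {w ∈ (K : Set Op) | ForwardZone H w}, zone H w

/-- Union of the backward zones of the clusters in `K`. -/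
def bwdUnion (H : History) (K : Finset Op) : Set ℝ :=
  ⋃ w ∈ {w ∈ (K : Set Op) | ¬ ForwardZone H w}, zone H w

/-- A chunk: a set of clusters (identified by their dictating writes) whose
forward zones union to a continuous nonempty time interval containing the
union of the chunk's backward zones. -/
def IsChunk (H : History) (K : Finset Op) : Prop :=
  (∀ w ∈ K, w ∈ H ∧ w.isWrite) ∧
  (fwdUnion H K).Nonempty ∧ (fwdUnion H K).OrdConnected ∧
  bwdUnion H K ⊆ fwdUnion H K

/-- A maximal chunk: no further cluster can be added while remaining a chunk. -/
def MaximalChunk (H : History) (K : Finset Op) : Prop :=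
  IsChunk H K ∧ ∀ w ∈ H, w.isWrite → w ∉ K → ¬ IsChunk H (insert w K)

/-- A chunk set of `H`: a set of maximal chunks covering every forward cluster. -/
def ChunkSet (H : History) (CS : Finset (Finset Op)) : Prop :=
  (∀ K ∈ CS, MaximalChunk H K) ∧
  ∀ w ∈ H, w.isWrite → ForwardZone H w → ∃ K ∈ CS, w ∈ K

/-- The projection `H|K` of `H` onto the chunk `K`: all operations of clusters in `K`. -/
noncomputable def proj (H : History) (K : Finset Op) : History :=
  H.filter (fun op => ∃ w ∈ K, op ∈ cluster H w)


theorem before_iff_sublist {l : List Op} {a b : Op} : Before l a b ↔ [a, b].Sublist l := by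
  constructor
  · rintro ⟨l₁, l₂, l₃, rfl⟩
    simp
  · intro h
    obtain ⟨r₁, r₂, rfl, ha, hb⟩ := List.cons_sublist_iff.mp h
    obtain ⟨x₁, x₂, rfl⟩ := List.append_of_mem ha
    obtain ⟨y₁, y₂, rfl⟩ := List.append_of_mem (List.singleton_sublist.mp hb)
    exact ⟨x₁, x₂ ++ y₁, y₂, by simp⟩

theorem Before.mono {l l' : List Op} {a b : Op} (h : Before l a b) (hl : l.Sublist l') :
    Before l' a b :=
  before_iff_sublist.mpr ((before_iff_sublist.mp h).trans hl)

theorem before_append {l l' : List Op} {a b : Op} (ha : a ∈ l) (hb : b ∈ l') :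
    Before (l ++ l') a b :=
  before_iff_sublist.mpr
    ((List.singleton_sublist.mpr ha).append (List.singleton_sublist.mpr hb))

theorem Valid.filter {l : List Op} (p : Op → Bool) (h : Valid l) : Valid (l.filter p) := by
  intro a ha b hb hab
  have hba := before_iff_sublist.mp
    (h a (List.mem_of_mem_filter ha) b (List.mem_of_mem_filter hb) hab)
  refine before_iff_sublist.mpr ?_
  simpa [List.filter_cons, (List.mem_filter.mp ha).2, (List.mem_filter.mp hb).2] using hba.filter p

theorem KAtomicOrder.filter {k : ℕ} {l : List Op} (p : Op → Bool) (h : KAtomicOrder k l) :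
    KAtomicOrder k (l.filter p) := by
  intro r hr hrR w hw hwW hwr
  obtain ⟨l₁, l₂, l₃, rfl, hl₂⟩ :=
    h r (List.mem_of_mem_filter hr) hrR w (List.mem_of_mem_filter hw) hwW hwr
  refine ⟨l₁.filter p, l₂.filter p, l₃.filter p, ?_, ?_⟩
  · simp [(List.mem_filter.mp hw).2, (List.mem_filter.mp hr).2]
  · exact le_trans ((List.filter_sublist.filter _).length_le) hl₂

theorem KAtomic.mono {k : ℕ} {H H' : History} (hH : H' ⊆ H) (h : KAtomic k H) :
    KAtomic k H' := by
  obtain ⟨l, ⟨hnd, hmem⟩, hval, hka⟩ := h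
  refine ⟨l.filter (· ∈ H'), ⟨hnd.filter _, fun op => ?_⟩, hval.filter _, hka.filter _⟩
  simpa [hmem] using fun h => hH h

theorem KAtomic.singleton {k : ℕ} {u : Op} (hu : u.s ≤ u.f) : KAtomic k {u} := by
  refine ⟨[u], ⟨List.nodup_singleton u, by simp⟩, ?_, ?_⟩
  · intro a ha b hb hab
    simp only [List.mem_singleton] at ha hb
    subst ha hb
    exact absurd hab (not_lt.mpr hu)
  · intro r hr hrR w hw hwW _
    simp only [List.mem_singleton] at hr hw
    subst hr hw
    simp [Op.isWrite, hrR] at hwW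

theorem List.exists_flatMap_eq_append {α β : Type*} {f : α → List β} {l : List α} {x : α}
    (hx : x ∈ l) : ∃ m₁ m₂, l.flatMap f = m₁ ++ f x ++ m₂ := by
  obtain ⟨s, t, rfl⟩ := List.append_of_mem hx
  exact ⟨s.flatMap f, t.flatMap f, by simp⟩

theorem before_flatMap_of_lt {ι β : Type*} [LinearOrder β] {pos : ι → β} {L : ι → List Op}
    {order : List ι} (hs : order.Pairwise (fun i j => pos i ≤ pos j)) {i j : ι}
    (hi : i ∈ order) (hj : j ∈ order) (hij : pos i < pos j) {a b : Op}
    (ha : a ∈ L i) (hb : b ∈ L j) : Before (order.flatMap L) a b := by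
  obtain ⟨s, t, rfl⟩ := List.append_of_mem hi
  rcases List.mem_append.mp hj with hjs | hjt
  · exact absurd ((List.pairwise_append.mp hs).2.2 j hjs i (by simp)) (not_le.mpr hij)
  · rcases List.mem_cons.mp hjt with rfl | hjt
    · exact absurd hij (lt_irrefl _)
    · rw [List.flatMap_append, List.flatMap_cons, ← List.append_assoc]
      exact before_append (List.mem_append_right _ ha) (List.mem_flatMap.mpr ⟨j, hjt, hb⟩)

theorem KAtomic.of_pieces {ι β : Type*} [LinearOrder β] {k : ℕ} {H : History} (P : Finset ι)
    (piece : ι → History) (pos : ι → β)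
    (hcover : ∀ op, op ∈ H ↔ ∃ i ∈ P, op ∈ piece i)
    (hdisj : (P : Set ι).PairwiseDisjoint piece)
    (hatomic : ∀ i ∈ P, KAtomic k (piece i))
    (hprec : ∀ i ∈ P, ∀ j ∈ P, i ≠ j → ∀ a ∈ piece i, ∀ b ∈ piece j, a.f < b.s → pos i < pos j)
    (hread : ∀ i ∈ P, ∀ r ∈ piece i, r.isRead = true →
      ∀ w ∈ H, w.isWrite → w.val = r.val → w ∈ piece i) :
    KAtomic k H := by
  choose! L hlin hvalid hka using hatomic
  set order := P.toList.mergeSort (fun i j => decide (pos i ≤ pos j))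
  have hmem_order : ∀ i, i ∈ order ↔ i ∈ P := fun i => by simp [order]
  have hsorted : order.Pairwise (fun i j => pos i ≤ pos j) := by
    simpa using List.pairwise_mergeSort (le := fun i j => decide (pos i ≤ pos j))
      (fun _ _ _ h₁ h₂ => by simpa using le_trans (by simpa using h₁) (by simpa using h₂))
      (fun i j => by simpa using le_total (pos i) (pos j)) P.toList
  have hmem : ∀ op, op ∈ order.flatMap L ↔ ∃ i ∈ P, op ∈ piece i := fun op => by
    simp only [List.mem_flatMap, hmem_order]
    exact exists_congr fun i => and_congr_right fun hi => (hlin i hi).2 op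
  refine ⟨order.flatMap L, ⟨?_, fun op => (hmem op).trans (hcover op).symm⟩, ?_, ?_⟩
  · refine List.nodup_flatMap.mpr ⟨fun i hi => (hlin i ((hmem_order i).mp hi)).1, ?_⟩
    refine (((List.mergeSort_perm _ _).nodup_iff.mpr P.nodup_toList).pairwise_of_forall_ne
      fun i hi j hj hij => ?_)
    rw [hmem_order] at hi hj
    exact fun op hop hop' => Finset.disjoint_left.mp (hdisj hi hj hij)
      (((hlin i hi).2 op).mp hop) (((hlin j hj).2 op).mp hop')
  · intro a ha b hb hab
    obtain ⟨i, hi, hai⟩ := List.mem_flatMap.mp ha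
    obtain ⟨j, hj, hbj⟩ := List.mem_flatMap.mp hb
    by_cases hij : i = j
    · subst hij
      obtain ⟨m₁, m₂, heq⟩ := List.exists_flatMap_eq_append (f := L) hi
      rw [heq]
      exact (hvalid i ((hmem_order i).mp hi) a hai b hbj hab).mono
        ((List.sublist_append_right m₁ _).trans (List.sublist_append_left _ m₂))
    · rw [hmem_order] at hi hj
      refine before_flatMap_of_lt hsorted ((hmem_order i).mpr hi) ((hmem_order j).mpr hj) ?_ hai hbj
      exact hprec i hi j hj hij a (((hlin i hi).2 a).mp hai) b (((hlin j hj).2 b).mp hbj) hab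
  · intro r hr hrR w hw hwW hwr
    obtain ⟨i, hi, hri⟩ := List.mem_flatMap.mp hr
    rw [hmem_order] at hi
    have hwi : w ∈ L i := ((hlin i hi).2 w).mpr <| hread i hi r (((hlin i hi).2 r).mp hri) hrR w
      ((hcover w).mpr ((hmem w).mp hw)) hwW hwr
    obtain ⟨l₁, l₂, l₃, hsplit, hl₂⟩ := hka i hi r hri hrR w hwi hwW hwr
    obtain ⟨m₁, m₂, heq⟩ := List.exists_flatMap_eq_append (f := L) ((hmem_order i).mpr hi)
    exact ⟨m₁ ++ l₁, l₂, l₃ ++ m₂, by simp [heq, hsplit], hl₂⟩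

section Clusters

variable {H : History} {w w' p : Op}

@[simp]
theorem mem_cluster_self (H : History) (w : Op) : w ∈ cluster H w :=
  Finset.mem_insert_self _ _

theorem mem_cluster : p ∈ cluster H w ↔ p = w ∨ p ∈ H ∧ p.isRead = true ∧ p.val = w.val := by
  simp [cluster]

theorem eq_of_mem_cluster_of_isWrite (hp : p ∈ cluster H w) (hpW : p.isWrite) : p = w := by
  rcases mem_cluster.mp hp with rfl | ⟨-, hpR, -⟩
  · rfl
  · simp [Op.isWrite, hpR] at hpW

theorem Wf.eq_of_mem_cluster (hWf : Wf H) (hw : w ∈ H) (hwW : w.isWrite) (hw' : w' ∈ H)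
    (hw'W : w'.isWrite) (hp : p ∈ cluster H w) (hp' : p ∈ cluster H w') : w = w' := by
  by_cases hpR : p.isRead = true
  · obtain ⟨-, -, hpv⟩ :=
      (mem_cluster.mp hp).resolve_left (by rintro rfl; simp [Op.isWrite, hpR] at hwW)
    obtain ⟨-, -, hpv'⟩ :=
      (mem_cluster.mp hp').resolve_left (by rintro rfl; simp [Op.isWrite, hpR] at hw'W)
    exact hWf.2.2.1 w hw w' hw' hwW hw'W (hpv.symm.trans hpv')
  · have hpW : p.isWrite := by simpa [Op.isWrite] using hpR
    exact (eq_of_mem_cluster_of_isWrite hp hpW).symm.trans (eq_of_mem_cluster_of_isWrite hp' hpW)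

theorem zoneL_le_f (hp : p ∈ cluster H w) : zoneL H w ≤ p.f :=
  (min_le_left _ _).trans (Finset.inf'_le _ hp)

theorem s_le_zoneH (hp : p ∈ cluster H w) : p.s ≤ zoneH H w :=
  (Finset.le_sup' _ hp).trans (le_max_right _ _)

theorem zoneL_mem_zone : zoneL H w ∈ zone H w := ⟨le_rfl, min_le_max⟩

theorem Wf.forwardZone_of_mem_cluster (hWf : Wf H) (hw : w ∈ H) (hwW : w.isWrite)
    (hp : p ∈ cluster H w) (hpw : p ≠ w) : ForwardZone H w := by
  obtain ⟨hpH, hpR, hpv⟩ := (mem_cluster.mp hp).resolve_left hpw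
  obtain ⟨w₀, hw₀, hw₀W, hw₀v, hw₀p⟩ := hWf.2.2.2 p hpH hpR
  obtain rfl : w₀ = w := hWf.2.2.1 w₀ hw₀ w hw hw₀W hwW (hw₀v.trans hpv)
  exact (Finset.inf'_le _ (mem_cluster_self H w₀)).trans_lt
    (hw₀p.trans_le (Finset.le_sup' _ hp))

theorem Wf.cluster_eq_singleton (hWf : Wf H) (hw : w ∈ H) (hwW : w.isWrite)
    (hback : ¬ ForwardZone H w) : cluster H w = {w} :=
  Finset.eq_singleton_iff_unique_mem.mpr ⟨mem_cluster_self H w, fun _ hp =>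
    by_contra fun hpw => hback (hWf.forwardZone_of_mem_cluster hw hwW hp hpw)⟩

theorem Wf.zone_eq_Icc (hWf : Wf H) (hw : w ∈ H) (hwW : w.isWrite)
    (hback : ¬ ForwardZone H w) : zone H w = Set.Icc w.s w.f := by
  have hc := hWf.cluster_eq_singleton hw hwW hback
  have hf : fmin H w = w.f := by simp [fmin, hc]
  have hs : smax H w = w.s := by simp [smax, hc]
  have hsf := (hWf.1 w hw).le
  rw [zone, zoneL, zoneH, hf, hs, min_eq_right hsf, max_eq_left hsf]

end Clusters

def span (H : History) (K : Finset Op) : Set ℝ := ⋃ w ∈ K, zone H w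

section Chunks

variable {H : History} {K K' : Finset Op} {w p : Op}

theorem mem_fwdUnion {t : ℝ} : t ∈ fwdUnion H K ↔ ∃ w ∈ K, ForwardZone H w ∧ t ∈ zone H w := by
  simp [fwdUnion, and_assoc]

theorem mem_bwdUnion {t : ℝ} :
    t ∈ bwdUnion H K ↔ ∃ w ∈ K, ¬ ForwardZone H w ∧ t ∈ zone H w := by
  simp [bwdUnion, and_assoc]

theorem span_eq_fwdUnion_union_bwdUnion : span H K = fwdUnion H K ∪ bwdUnion H K := by
  ext t
  simp only [span, Set.mem_iUnion, Set.mem_union, mem_fwdUnion, mem_bwdUnion, exists_prop]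
  constructor
  · rintro ⟨w, hw, ht⟩
    by_cases hF : ForwardZone H w
    exacts [Or.inl ⟨w, hw, hF, ht⟩, Or.inr ⟨w, hw, hF, ht⟩]
  · rintro (⟨w, hw, -, ht⟩ | ⟨w, hw, -, ht⟩) <;> exact ⟨w, hw, ht⟩

theorem span_singleton : span H {w} = zone H w := by simp [span]

theorem isCompact_span : IsCompact (span H K) :=
  K.isCompact_biUnion fun _ _ => isCompact_Icc

theorem sInf_span_le_f (hw : w ∈ K) (hp : p ∈ cluster H w) : sInf (span H K) ≤ p.f :=
  (csInf_le isCompact_span.bddBelow (Set.mem_biUnion hw zoneL_mem_zone)).trans (zoneL_le_f hp)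

theorem s_le_sSup_span (hw : w ∈ K) (hp : p ∈ cluster H w) : p.s ≤ sSup (span H K) :=
  (s_le_zoneH hp).trans
    (le_csSup isCompact_span.bddAbove (Set.mem_biUnion hw ⟨min_le_max, le_rfl⟩))

theorem IsChunk.span_eq (hK : IsChunk H K) : span H K = fwdUnion H K := by
  rw [span_eq_fwdUnion_union_bwdUnion, Set.union_eq_left.mpr hK.2.2.2]

theorem IsChunk.zone_subset (hK : IsChunk H K) (hw : w ∈ K) : zone H w ⊆ fwdUnion H K :=
  hK.span_eq ▸ Set.subset_biUnion_of_mem (u := fun w => zone H w) hw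

theorem IsChunk.span_eq_Icc (hK : IsChunk H K) :
    span H K = Set.Icc (sInf (span H K)) (sSup (span H K)) := by
  refine eq_Icc_of_connected_compact ⟨?_, ?_⟩ isCompact_span <;> rw [hK.span_eq]
  exacts [hK.2.1, hK.2.2.1.isPreconnected]

theorem fwdUnion_insert_of_forwardZone (hF : ForwardZone H w) :
    fwdUnion H (insert w K) = zone H w ∪ fwdUnion H K := by
  ext t
  simp only [mem_fwdUnion, Finset.mem_insert, Set.mem_union]
  constructor
  · rintro ⟨w', rfl | hw', hF', ht⟩
    exacts [Or.inl ht, Or.inr ⟨w', hw', hF', ht⟩]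
  · rintro (ht | ⟨w', hw', hF', ht⟩)
    exacts [⟨w, Or.inl rfl, hF, ht⟩, ⟨w', Or.inr hw', hF', ht⟩]

theorem fwdUnion_insert_of_not_forwardZone (hB : ¬ ForwardZone H w) :
    fwdUnion H (insert w K) = fwdUnion H K := by
  ext t
  simp only [mem_fwdUnion, Finset.mem_insert]
  constructor
  · rintro ⟨w', rfl | hw', hF', ht⟩
    exacts [absurd hF' hB, ⟨w', hw', hF', ht⟩]
  · rintro ⟨w', hw', hF', ht⟩
    exact ⟨w', Or.inr hw', hF', ht⟩

theorem bwdUnion_insert_subset : bwdUnion H (insert w K) ⊆ zone H w ∪ bwdUnion H K := by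
  intro t ht
  obtain ⟨w', hw', hB', htw'⟩ := mem_bwdUnion.mp ht
  rcases Finset.mem_insert.mp hw' with rfl | hw'
  exacts [Or.inl htw', Or.inr (mem_bwdUnion.mpr ⟨w', hw', hB', htw'⟩)]

theorem IsChunk.insert_of_forwardZone (hK : IsChunk H K) (hw : w ∈ H) (hwW : w.isWrite)
    (hF : ForwardZone H w) (hmeet : (zone H w ∩ fwdUnion H K).Nonempty) :
    IsChunk H (insert w K) := by
  rw [IsChunk, fwdUnion_insert_of_forwardZone hF]
  exact ⟨by simpa [hw, hwW] using hK.1, ⟨zoneL H w, Or.inl zoneL_mem_zone⟩,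
    (isPreconnected_Icc.union' hmeet hK.2.2.1.isPreconnected).ordConnected,
    bwdUnion_insert_subset.trans (Set.union_subset_union_right _ hK.2.2.2)⟩

theorem IsChunk.insert_of_zone_subset (hK : IsChunk H K) (hw : w ∈ H) (hwW : w.isWrite)
    (hB : ¬ ForwardZone H w) (hsub : zone H w ⊆ fwdUnion H K) : IsChunk H (insert w K) := by
  rw [IsChunk, fwdUnion_insert_of_not_forwardZone hB]
  exact ⟨by simpa [hw, hwW] using hK.1, hK.2.1, hK.2.2.1,
    bwdUnion_insert_subset.trans (Set.union_subset hsub hK.2.2.2)⟩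

theorem MaximalChunk.mem_of_forwardZone (hK : MaximalChunk H K) (hw : w ∈ H) (hwW : w.isWrite)
    (hF : ForwardZone H w) (hmeet : (zone H w ∩ fwdUnion H K).Nonempty) : w ∈ K :=
  by_contra fun hwK => hK.2 w hw hwW hwK (hK.1.insert_of_forwardZone hw hwW hF hmeet)

theorem MaximalChunk.mem_of_zone_subset (hK : MaximalChunk H K) (hw : w ∈ H) (hwW : w.isWrite)
    (hB : ¬ ForwardZone H w) (hsub : zone H w ⊆ fwdUnion H K) : w ∈ K :=
  by_contra fun hwK => hK.2 w hw hwW hwK (hK.1.insert_of_zone_subset hw hwW hB hsub)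

/-- A forward cluster of `K'` outside `K` has its zone disjoint from the interval of `K`, by
maximality of `K`; the interval of `K'` is connected, so no such cluster exists. -/
theorem MaximalChunk.subset_of_inter (hK : MaximalChunk H K) (hK' : MaximalChunk H K')
    (hmeet : (fwdUnion H K ∩ fwdUnion H K').Nonempty) : K' ⊆ K := by
  have hwrite : ∀ w ∈ K', w ∈ H ∧ w.isWrite := hK'.1.1
  have hfwd : ∀ w ∈ K', ForwardZone H w → w ∈ K := by
    by_contra! ⟨w₀, hw₀, hF₀, hw₀K⟩
    set outside := ⋃ w ∈ K'.filter (fun w => ForwardZone H w ∧ w ∉ K), zone H w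
    have hcover : fwdUnion H K' ⊆ fwdUnion H K ∪ outside := by
      intro t ht
      obtain ⟨w, hw, hF, ht⟩ := mem_fwdUnion.mp ht
      by_cases hwK : w ∈ K
      · exact Or.inl (mem_fwdUnion.mpr ⟨w, hwK, hF, ht⟩)
      · exact Or.inr (Set.mem_biUnion (by simp [hw, hF, hwK]) ht)
    obtain ⟨y, -, hyK, hyout⟩ := isPreconnected_closed_iff.mp hK'.1.2.2.1.isPreconnected
      (fwdUnion H K) outside (hK.1.span_eq ▸ isCompact_span.isClosed)
      ((K'.filter _).isCompact_biUnion fun _ _ => isCompact_Icc).isClosed hcover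
      (Set.inter_comm _ _ ▸ hmeet)
      ⟨zoneL H w₀, mem_fwdUnion.mpr ⟨w₀, hw₀, hF₀, zoneL_mem_zone⟩,
        Set.mem_biUnion (by simp [hw₀, hF₀, hw₀K]) zoneL_mem_zone⟩
    obtain ⟨w, hw, hyw⟩ := Set.mem_iUnion₂.mp hyout
    simp only [Finset.mem_filter] at hw
    exact hw.2.2 (hK.mem_of_forwardZone (hwrite w hw.1).1 (hwrite w hw.1).2 hw.2.1 ⟨y, hyw, hyK⟩)
  have hsub : fwdUnion H K' ⊆ fwdUnion H K := fun t ht => by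
    obtain ⟨w, hw, hF, ht⟩ := mem_fwdUnion.mp ht
    exact mem_fwdUnion.mpr ⟨w, hfwd w hw hF, hF, ht⟩
  intro w hw
  by_cases hF : ForwardZone H w
  · exact hfwd w hw hF
  · exact hK.mem_of_zone_subset (hwrite w hw).1 (hwrite w hw).2 hF
      ((hK'.1.zone_subset hw).trans hsub)

theorem MaximalChunk.eq_of_inter (hK : MaximalChunk H K) (hK' : MaximalChunk H K')
    (hmeet : (fwdUnion H K ∩ fwdUnion H K').Nonempty) : K = K' :=
  (hK'.subset_of_inter hK (Set.inter_comm _ _ ▸ hmeet)).antisymm (hK.subset_of_inter hK' hmeet)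

theorem MaximalChunk.eq_of_mem (hK : MaximalChunk H K) (hK' : MaximalChunk H K') (hw : w ∈ K)
    (hw' : w ∈ K') : K = K' :=
  hK.eq_of_inter hK' ⟨zoneL H w, hK.1.zone_subset hw zoneL_mem_zone,
    hK'.1.zone_subset hw' zoneL_mem_zone⟩

end Chunks

noncomputable def loneWrites (H : History) (CS : Finset (Finset Op)) : Finset Op :=
  H.filter (fun u => u.isWrite ∧ ∀ K ∈ CS, u ∉ K)

/-- Their projections partition `H`: a write outside all chunks of `CS` has a backward cluster,
which consists of the write alone. -/
noncomputable def pieces (H : History) (CS : Finset (Finset Op)) : Finset (Finset Op) :=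
  CS ∪ (loneWrites H CS).image singleton

section Pieces

variable {H : History} {CS : Finset (Finset Op)} {A B : Finset Op} {u w a b : Op}

theorem mem_loneWrites : u ∈ loneWrites H CS ↔ u ∈ H ∧ u.isWrite ∧ ∀ K ∈ CS, u ∉ K :=
  Finset.mem_filter

theorem mem_pieces : A ∈ pieces H CS ↔ A ∈ CS ∨ ∃ u ∈ loneWrites H CS, {u} = A := by
  simp [pieces]

theorem mem_proj : a ∈ proj H A ↔ a ∈ H ∧ ∃ w ∈ A, a ∈ cluster H w :=
  Finset.mem_filter

theorem ChunkSet.not_forwardZone_of_mem_loneWrites (hCS : ChunkSet H CS)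
    (hu : u ∈ loneWrites H CS) : ¬ ForwardZone H u := fun hF => by
  obtain ⟨huH, huW, hnot⟩ := mem_loneWrites.mp hu
  obtain ⟨K, hK, huK⟩ := hCS.2 u huH huW hF
  exact hnot K hK huK

theorem ChunkSet.cluster_loneWrite (hWf : Wf H) (hCS : ChunkSet H CS)
    (hu : u ∈ loneWrites H CS) : cluster H u = {u} :=
  hWf.cluster_eq_singleton (mem_loneWrites.mp hu).1 (mem_loneWrites.mp hu).2.1
    (hCS.not_forwardZone_of_mem_loneWrites hu)

theorem ChunkSet.span_loneWrite (hWf : Wf H) (hCS : ChunkSet H CS)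
    (hu : u ∈ loneWrites H CS) : span H {u} = Set.Icc u.s u.f := by
  rw [span_singleton, hWf.zone_eq_Icc (mem_loneWrites.mp hu).1 (mem_loneWrites.mp hu).2.1
    (hCS.not_forwardZone_of_mem_loneWrites hu)]

theorem ChunkSet.sInf_span_loneWrite (hWf : Wf H) (hCS : ChunkSet H CS)
    (hu : u ∈ loneWrites H CS) : sInf (span H {u}) = u.s := by
  rw [hCS.span_loneWrite hWf hu, csInf_Icc (hWf.1 u (mem_loneWrites.mp hu).1).le]

theorem ChunkSet.proj_loneWrite (hWf : Wf H) (hCS : ChunkSet H CS)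
    (hu : u ∈ loneWrites H CS) : proj H {u} = {u} := by
  ext a
  simp [mem_proj, hCS.cluster_loneWrite hWf hu]
  exact fun h => h ▸ (mem_loneWrites.mp hu).1

theorem ChunkSet.isWrite_of_mem_pieces (hCS : ChunkSet H CS) (hA : A ∈ pieces H CS) :
    ∀ w ∈ A, w ∈ H ∧ w.isWrite := by
  rcases mem_pieces.mp hA with hA | ⟨u, hu, rfl⟩
  · exact (hCS.1 A hA).1.1
  · simpa using (mem_loneWrites.mp hu).imp_right And.left

theorem ChunkSet.eq_of_mem_pieces (hCS : ChunkSet H CS) (hA : A ∈ pieces H CS)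
    (hB : B ∈ pieces H CS) (hwA : w ∈ A) (hwB : w ∈ B) : A = B := by
  rcases mem_pieces.mp hA with hA | ⟨u, hu, rfl⟩ <;>
    rcases mem_pieces.mp hB with hB | ⟨v, hv, rfl⟩
  · exact (hCS.1 A hA).eq_of_mem (hCS.1 B hB) hwA hwB
  · obtain rfl := Finset.mem_singleton.mp hwB
    exact absurd hwA ((mem_loneWrites.mp hv).2.2 A hA)
  · obtain rfl := Finset.mem_singleton.mp hwA
    exact absurd hwB ((mem_loneWrites.mp hu).2.2 B hB)
  · rw [← Finset.mem_singleton.mp hwA, ← Finset.mem_singleton.mp hwB]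

theorem ChunkSet.pairwiseDisjoint_proj (hWf : Wf H) (hCS : ChunkSet H CS) :
    (pieces H CS : Set (Finset Op)).PairwiseDisjoint (proj H) := by
  intro A hA B hB hAB
  refine Finset.disjoint_left.mpr fun a haA haB => hAB ?_
  obtain ⟨-, w, hwA, haw⟩ := mem_proj.mp haA
  obtain ⟨-, w', hw'B, haw'⟩ := mem_proj.mp haB
  have hw := hCS.isWrite_of_mem_pieces hA w hwA
  have hw' := hCS.isWrite_of_mem_pieces hB w' hw'B
  obtain rfl := hWf.eq_of_mem_cluster hw.1 hw.2 hw'.1 hw'.2 haw haw'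
  exact hCS.eq_of_mem_pieces hA hB hwA hw'B

theorem ChunkSet.exists_mem_proj_pieces (hWf : Wf H) (hCS : ChunkSet H CS) (ha : a ∈ H) :
    ∃ A ∈ pieces H CS, a ∈ proj H A := by
  by_cases haR : a.isRead = true
  · obtain ⟨w, hw, hwW, hwv, -⟩ := hWf.2.2.2 a ha haR
    have haw : a ∈ cluster H w := mem_cluster.mpr (Or.inr ⟨ha, haR, hwv.symm⟩)
    have haw' : a ≠ w := by rintro rfl; simp [Op.isWrite, haR] at hwW
    obtain ⟨K, hK, hwK⟩ := hCS.2 w hw hwW (hWf.forwardZone_of_mem_cluster hw hwW haw haw')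
    exact ⟨K, mem_pieces.mpr (Or.inl hK), mem_proj.mpr ⟨ha, w, hwK, haw⟩⟩
  · have haW : a.isWrite := by simpa [Op.isWrite] using haR
    by_cases hin : ∃ K ∈ CS, a ∈ K
    · obtain ⟨K, hK, haK⟩ := hin
      exact ⟨K, mem_pieces.mpr (Or.inl hK), mem_proj.mpr ⟨ha, a, haK, mem_cluster_self H a⟩⟩
    · push Not at hin
      exact ⟨{a}, mem_pieces.mpr (Or.inr ⟨a, mem_loneWrites.mpr ⟨ha, haW, hin⟩, rfl⟩),
        mem_proj.mpr ⟨ha, a, Finset.mem_singleton_self a, mem_cluster_self H a⟩⟩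

theorem Wf.mem_proj_of_isRead (hWf : Wf H) (hA : ∀ w ∈ A, w ∈ H ∧ w.isWrite) {r : Op}
    (hr : r ∈ proj H A) (hrR : r.isRead = true) (hw : w ∈ H) (hwW : w.isWrite)
    (hwr : w.val = r.val) : w ∈ proj H A := by
  obtain ⟨hrH, w₀, hw₀, hrw₀⟩ := mem_proj.mp hr
  have hrw : r ∈ cluster H w := mem_cluster.mpr (Or.inr ⟨hrH, hrR, hwr.symm⟩)
  obtain rfl := hWf.eq_of_mem_cluster hw hwW (hA w₀ hw₀).1 (hA w₀ hw₀).2 hrw hrw₀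
  exact mem_proj.mpr ⟨hw, w, hw₀, mem_cluster_self H w⟩

theorem ChunkSet.katomic_proj_pieces {k : ℕ} (hWf : Wf H) (hCS : ChunkSet H CS)
    (h : ∀ K ∈ CS, KAtomic k (proj H K)) (hA : A ∈ pieces H CS) : KAtomic k (proj H A) := by
  rcases mem_pieces.mp hA with hA | ⟨u, hu, rfl⟩
  · exact h A hA
  · rw [hCS.proj_loneWrite hWf hu]
    exact KAtomic.singleton (hWf.1 u (mem_loneWrites.mp hu).1).le

/-- Two chunks have disjoint intervals, and a lone write starting after the left end of a chunk
that it precedes would have its zone inside the chunk's interval, contradicting maximality. -/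
theorem ChunkSet.sInf_span_lt (hWf : Wf H) (hCS : ChunkSet H CS) (hA : A ∈ pieces H CS)
    (hB : B ∈ pieces H CS) (hAB : A ≠ B) (ha : a ∈ proj H A) (hb : b ∈ proj H B)
    (hab : a.f < b.s) : sInf (span H A) < sInf (span H B) := by
  obtain ⟨-, wa, hwa, haw⟩ := mem_proj.mp ha
  obtain ⟨-, wb, hwb, hbw⟩ := mem_proj.mp hb
  rcases mem_pieces.mp hB with hB | ⟨v, hv, rfl⟩
  swap
  · obtain rfl := Finset.mem_singleton.mp hwb
    rw [hCS.cluster_loneWrite hWf hv, Finset.mem_singleton] at hbw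
    rw [hCS.sInf_span_loneWrite hWf hv, ← hbw]
    exact (sInf_span_le_f hwa haw).trans_lt hab
  have hbB : b.s ≤ sSup (span H B) := s_le_sSup_span hwb hbw
  by_contra! hle
  rcases mem_pieces.mp hA with hA | ⟨u, hu, rfl⟩
  · have hmem : sInf (span H A) ∈ span H A ∩ span H B := by
      refine ⟨isCompact_span.sInf_mem ⟨_, Set.mem_biUnion hwa zoneL_mem_zone⟩, ?_⟩
      rw [(hCS.1 B hB).1.span_eq_Icc]
      exact ⟨hle, ((sInf_span_le_f hwa haw).trans_lt hab).le.trans hbB⟩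
    rw [(hCS.1 A hA).1.span_eq, (hCS.1 B hB).1.span_eq] at hmem
    exact hAB ((hCS.1 A hA).eq_of_inter (hCS.1 B hB) ⟨_, hmem⟩)
  · obtain rfl := Finset.mem_singleton.mp hwa
    rw [hCS.cluster_loneWrite hWf hu, Finset.mem_singleton] at haw
    rw [hCS.sInf_span_loneWrite hWf hu] at hle
    obtain ⟨huH, huW, hnot⟩ := mem_loneWrites.mp hu
    refine hnot B hB ((hCS.1 B hB).mem_of_zone_subset huH huW
      (hCS.not_forwardZone_of_mem_loneWrites hu) ?_)
    rw [hWf.zone_eq_Icc huH huW (hCS.not_forwardZone_of_mem_loneWrites hu),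
      ← (hCS.1 B hB).1.span_eq, (hCS.1 B hB).1.span_eq_Icc]
    exact Set.Icc_subset_Icc hle (haw ▸ hab.le.trans hbB)

end Pieces

/-- A history `H` is 2-atomic iff for every maximal chunk `K` in the chunk set,
the projection `H|K` is 2-atomic. -/
theorem stmt_3 (H : History) (hWf : Wf H) (CS : Finset (Finset Op))
    (hCS : ChunkSet H CS) :
    KAtomic 2 H ↔ ∀ K ∈ CS, KAtomic 2 (proj H K) := by
  refine ⟨fun h K _ => h.mono (Finset.filter_subset _ _), fun h => ?_⟩
  refine KAtomic.of_pieces (pieces H CS) (proj H) (fun A => sInf (span H A)) (fun a => ?_)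
    (hCS.pairwiseDisjoint_proj hWf) (fun A hA => hCS.katomic_proj_pieces hWf h hA)
    (fun A hA B hB hAB a ha b hb hab => hCS.sInf_span_lt hWf hA hB hAB ha hb hab)
    (fun A hA _ hr hrR _ hw hwW hwr =>
      hWf.mem_proj_of_isRead (hCS.isWrite_of_mem_pieces hA) hr hrR hw hwW hwr)
  exact ⟨hCS.exists_mem_proj_pieces hWf, fun ⟨A, _, ha⟩ => (mem_proj.mp ha).1⟩
end

section
/- k-atomicity is equivalent to a commit-point formulation: a history H is k-atomic if and only if each operation op can be assigned a distinct commit point c(op) in the open interval (op.s, op.f) such that, ordering operations by commit point, every read follows its dictating write with at most k−1 other writes in between. -/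
open scoped Classical

/-! Ordering operations by their commit points gives a valid order, since `a.f < b.s` forces
`c a < a.f < b.s < c b`, and the separation counts agree because the operations between `w` and
`r` in that order are exactly those committed between `c w` and `c r`. Conversely, in a valid order
with distinct endpoints every operation starts before each later one finishes, so commit points
can be placed greedily along the order: each above its predecessor's and its own start, and below
every finish time from it onwards. -/

theorem before_cons_iff {x a b : Op} {t : List Op} :
    Before (x :: t) a b ↔ (a = x ∧ b ∈ t) ∨ Before t a b := by
  constructor
  · rintro ⟨_ | ⟨y, l1⟩, l2, l3, h⟩
    · simp only [List.nil_append, List.cons_append, List.cons.injEq] at h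
      exact Or.inl ⟨h.1.symm, by simp [h.2]⟩
    · simp only [List.cons_append, List.cons.injEq] at h
      exact Or.inr ⟨l1, l2, l3, by simpa using h.2⟩
  · rintro (⟨rfl, hb⟩ | ⟨l1, l2, l3, h⟩)
    · obtain ⟨l2, l3, rfl⟩ := List.append_of_mem hb
      exact ⟨[], l2, l3, by simp⟩
    · exact ⟨x :: l1, l2, l3, by simp [h]⟩

theorem Before.mem_left {l : List Op} {a b : Op} (h : Before l a b) : a ∈ l := by
  obtain ⟨l1, l2, l3, rfl⟩ := h
  simp

theorem Before.mem_right {l : List Op} {a b : Op} (h : Before l a b) : b ∈ l := by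
  obtain ⟨l1, l2, l3, rfl⟩ := h
  simp

theorem Valid.of_cons {x : Op} {t : List Op} (hx : x ∉ t) (hv : Valid (x :: t)) : Valid t := by
  intro a ha b hb hab
  rcases before_cons_iff.mp (hv a (.tail _ ha) b (.tail _ hb) hab) with ⟨rfl, -⟩ | h
  · exact absurd ha hx
  · exact h

theorem Valid.pairwise_s_lt_f {l : List Op} (hnd : l.Nodup) (hv : Valid l)
    (hsf : ∀ a ∈ l, ∀ b ∈ l, a ≠ b → a.s ≠ b.f) (hdur : ∀ a ∈ l, a.s < a.f) :
    l.Pairwise fun a b => a.s < b.f := by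
  induction l with
  | nil => exact .nil
  | cons x t ih =>
    obtain ⟨hxt, hnd⟩ := List.nodup_cons.mp hnd
    refine List.pairwise_cons.mpr ⟨fun b hb => ?_, ih hnd (hv.of_cons hxt)
      (fun a ha b hb => hsf a (.tail _ ha) b (.tail _ hb)) (fun a ha => hdur a (.tail _ ha))⟩
    have hxb : x ≠ b := fun h => hxt (h ▸ hb)
    refine lt_of_le_of_ne (not_lt.mp fun hfs => hxt ?_) (hsf x (by simp) b (.tail _ hb) hxb)
    rcases before_cons_iff.mp (hv b (.tail _ hb) x (by simp) hfs) with ⟨rfl, -⟩ | h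
    · exact hb
    · exact h.mem_right

section Sorted

variable {β : Type*} [LinearOrder β] {c : Op → β} {l : List Op}

theorem before_iff_lt (hp : l.Pairwise (c · < c ·)) {a b : Op} (ha : a ∈ l) (hb : b ∈ l) :
    Before l a b ↔ c a < c b := by
  induction l with
  | nil => simp at ha
  | cons x t ih =>
    obtain ⟨hx, ht⟩ := List.pairwise_cons.mp hp
    rw [before_cons_iff]
    constructor
    · rintro (⟨rfl, hbt⟩ | h)
      · exact hx b hbt
      · exact (ih ht h.mem_left h.mem_right).mp h
    · intro hab
      rcases List.mem_cons.mp ha with rfl | hat <;> rcases List.mem_cons.mp hb with rfl | hbt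
      · exact absurd hab (lt_irrefl _)
      · exact Or.inl ⟨rfl, hbt⟩
      · exact absurd (hx a hat) (not_lt.mpr hab.le)
      · exact Or.inr ((ih ht hat hbt).mpr hab)

theorem mem_between_iff (hp : l.Pairwise (c · < c ·)) {l1 l2 l3 : List Op} {w r : Op}
    (hl : l = l1 ++ w :: l2 ++ r :: l3) (op : Op) :
    op ∈ l2 ↔ op ∈ l ∧ c w < c op ∧ c op < c r := by
  subst hl
  simp only [List.append_assoc, List.cons_append, List.pairwise_append, List.pairwise_cons,
    List.mem_append, List.mem_cons] at hp ⊢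
  obtain ⟨-, ⟨hw, -, ⟨hr, -⟩, h2r⟩, h1⟩ := hp
  constructor
  · intro h
    exact ⟨.inr (.inr (.inl h)), hw op (.inl h), h2r op h r (.inl rfl)⟩
  · rintro ⟨h | rfl | h | rfl | h, hwop, hopr⟩
    · exact absurd (h1 op h w (.inl rfl)) (not_lt.mpr hwop.le)
    · exact absurd hwop (lt_irrefl _)
    · exact h
    · exact absurd hopr (lt_irrefl _)
    · exact absurd (hr op h) (not_lt.mpr hopr.le)

theorem length_filter_writes_eq_card {H : History} (hlin : IsLinearization H l)
    (hp : l.Pairwise (c · < c ·)) {l1 l2 l3 : List Op} {w r : Op}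
    (hl : l = l1 ++ w :: l2 ++ r :: l3) :
    (l2.filter (fun op => op.isRead = false)).length =
      (H.filter (fun w' => w'.isWrite ∧ c w < c w' ∧ c w' < c r)).card := by
  have hnd : l2.Nodup := (hl ▸ hlin.1).sublist <|
    by simpa using ((List.sublist_append_left l2 _).cons w).trans (List.sublist_append_right l1 _)
  rw [← List.toFinset_card_of_nodup (hnd.filter _)]
  congr 1
  ext op
  rw [Finset.mem_filter]
  simp only [List.mem_toFinset, List.mem_filter, mem_between_iff hp hl,
    hlin.2, decide_eq_true_eq, Op.isWrite]
  tauto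

theorem kAtomicOrder_iff {H : History} (hlin : IsLinearization H l)
    (hp : l.Pairwise (c · < c ·)) (k : ℕ) :
    KAtomicOrder k l ↔ ∀ r ∈ H, r.isRead = true → ∀ w ∈ H, w.isWrite → w.val = r.val →
      c w < c r ∧
        (H.filter (fun w' => w'.isWrite ∧ c w < c w' ∧ c w' < c r)).card ≤ k - 1 := by
  simp only [KAtomicOrder, hlin.2]
  refine forall₂_congr fun r hr => forall_congr' fun _ => forall₂_congr fun w hw =>
    forall₂_congr fun _ _ => ?_
  have hbefore := before_iff_lt hp ((hlin.2 w).mpr hw) ((hlin.2 r).mpr hr)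
  constructor
  · rintro ⟨l1, l2, l3, hl, hlen⟩
    exact ⟨hbefore.mp ⟨l1, l2, l3, hl⟩, length_filter_writes_eq_card hlin hp hl ▸ hlen⟩
  · rintro ⟨hlt, hcard⟩
    obtain ⟨l1, l2, l3, hl⟩ := hbefore.mpr hlt
    exact ⟨l1, l2, l3, hl, (length_filter_writes_eq_card hlin hp hl).trans_le hcard⟩

theorem exists_linearization_pairwise_lt (H : History) (hc : Set.InjOn c H) :
    ∃ l, IsLinearization H l ∧ l.Pairwise (c · < c ·) := by
  set l := H.toList.mergeSort (fun a b => decide (c a ≤ c b))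
  have hperm : l.Perm H.toList := List.mergeSort_perm _ _
  have hnd : l.Nodup := hperm.nodup_iff.mpr H.nodup_toList
  have hmem : ∀ op, op ∈ l ↔ op ∈ H := fun op => by simp [hperm.mem_iff]
  have hle : l.Pairwise (c · ≤ c ·) := by
    simpa using List.pairwise_mergeSort (le := fun a b => decide (c a ≤ c b))
      (by simpa using fun _ _ _ => le_trans) (by simpa using fun a b => le_total (c a) (c b))
      H.toList
  refine ⟨l, ⟨hnd, hmem⟩, (hle.and hnd).imp_of_mem fun ha hb h => ?_⟩
  exact lt_of_le_of_ne h.1 fun he => h.2 (hc ((hmem _).mp ha) ((hmem _).mp hb) he)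

end Sorted

theorem valid_of_pairwise_lt {c : Op → ℝ} {l : List Op}
    (hc : ∀ op ∈ l, op.s < c op ∧ c op < op.f) (hp : l.Pairwise (c · < c ·)) : Valid l :=
  fun a ha b hb hab => (before_iff_lt hp ha hb).mpr (((hc a ha).2.trans hab).trans (hc b hb).1)

theorem exists_pairwise_lt_of_pairwise_s_lt_f {α : Type*} (s f : α → ℝ) {l : List α}
    (hnd : l.Nodup) (hdur : ∀ a ∈ l, s a < f a) (hsf : l.Pairwise fun a b => s a < f b)
    (L : ℝ) (hL : ∀ a ∈ l, L < f a) :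
    ∃ c : α → ℝ, (∀ a ∈ l, L < c a ∧ s a < c a ∧ c a < f a) ∧ l.Pairwise (c · < c ·) := by
  induction l generalizing L with
  | nil => exact ⟨fun _ => L, by simp, .nil⟩
  | cons x t ih =>
    obtain ⟨hxt, hnd⟩ := List.nodup_cons.mp hnd
    obtain ⟨hsx, hsf⟩ := List.pairwise_cons.mp hsf
    have hmem : x ∈ (x :: t).toFinset := by simp
    have hlow : max L (s x) < (x :: t).toFinset.inf' ⟨x, hmem⟩ f := by
      refine (Finset.lt_inf'_iff _).mpr fun b hb => max_lt (hL b (List.mem_toFinset.mp hb)) ?_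
      rcases List.mem_cons.mp (List.mem_toFinset.mp hb) with rfl | hbt
      · exact hdur b (by simp)
      · exact hsx b hbt
    obtain ⟨y, hLy, hyf⟩ := exists_between hlow
    obtain ⟨c, hc, hp⟩ := ih hnd (fun a ha => hdur a (.tail _ ha)) hsf y fun a ha =>
      hyf.trans_le (Finset.inf'_le _ (by simp [ha]))
    have hcx : ∀ a ∈ t, Function.update c x y a = c a := fun a ha =>
      Function.update_of_ne (fun h : a = x => hxt (h ▸ ha)) _ _
    refine ⟨Function.update c x y, ?_, ?_⟩
    · intro a ha
      rcases List.mem_cons.mp ha with rfl | hat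
      · simp only [Function.update_self]
        exact ⟨(le_max_left _ _).trans_lt hLy, (le_max_right _ _).trans_lt hLy,
          hyf.trans_le (Finset.inf'_le f hmem)⟩
      · rw [hcx a hat]
        exact ⟨((le_max_left _ _).trans_lt hLy).trans (hc a hat).1, (hc a hat).2⟩
    · refine List.pairwise_cons.mpr ⟨fun a ha => ?_, ?_⟩
      · rw [Function.update_self, hcx a ha]
        exact (hc a ha).1
      · exact hp.imp_of_mem fun ha hb h => by rwa [hcx _ ha, hcx _ hb]

theorem Valid.exists_commit_points {l : List Op} (hnd : l.Nodup) (hv : Valid l)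
    (hsf : ∀ a ∈ l, ∀ b ∈ l, a ≠ b → a.s ≠ b.f) (hdur : ∀ a ∈ l, a.s < a.f) :
    ∃ c : Op → ℝ, (∀ op ∈ l, op.s < c op ∧ c op < op.f) ∧ l.Pairwise (c · < c ·) := by
  obtain ⟨L, hL⟩ := (l.map Op.f).toFinset.bddBelow
  obtain ⟨c, hc, hp⟩ := exists_pairwise_lt_of_pairwise_s_lt_f Op.s Op.f hnd hdur
    (hv.pairwise_s_lt_f hnd hsf hdur) (L - 1) fun op h =>
      (sub_one_lt L).trans_le (hL (List.mem_toFinset.mpr (List.mem_map_of_mem h)))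
  exact ⟨c, fun op h => (hc op h).2, hp⟩

theorem stmt_17_general (H : History) (hWf : Wf H) (k : ℕ) :
    KAtomic k H ↔ ∃ c : Op → ℝ,
      (∀ op ∈ H, op.s < c op ∧ c op < op.f) ∧
      (∀ a ∈ H, ∀ b ∈ H, a ≠ b → c a ≠ c b) ∧
      (∀ r ∈ H, r.isRead = true → ∀ w ∈ H, w.isWrite → w.val = r.val →
        c w < c r ∧
          (H.filter (fun w' => w'.isWrite ∧ c w < c w' ∧ c w' < c r)).card ≤ k - 1) := by
  obtain ⟨hdur, hdistinct, -, -⟩ := hWf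
  constructor
  · rintro ⟨l, hlin, hv, hka⟩
    have hmem := hlin.2
    obtain ⟨c, hc, hp⟩ := hv.exists_commit_points hlin.1
      (fun a ha b hb hab => (hdistinct a ((hmem a).mp ha) b ((hmem b).mp hb) hab).2.2)
      (fun op h => hdur op ((hmem op).mp h))
    have hinj : Set.InjOn c {op | op ∈ l} :=
      List.inj_on_of_nodup_map (List.pairwise_map.mpr hp).nodup
    refine ⟨c, fun op h => hc op ((hmem op).mpr h), fun a ha b hb hab he => hab ?_,
      (kAtomicOrder_iff hlin hp k).mp hka⟩
    exact hinj ((hmem a).mpr ha) ((hmem b).mpr hb) he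
  · rintro ⟨c, hc, hinj, hka⟩
    obtain ⟨l, hlin, hp⟩ := exists_linearization_pairwise_lt H (c := c)
      fun a ha b hb he => by_contra fun hab => hinj a ha b hb hab he
    exact ⟨l, hlin, valid_of_pairwise_lt (fun op h => hc op ((hlin.2 op).mp h)) hp,
      (kAtomicOrder_iff hlin hp k).mpr hka⟩

/-- `k`-atomicity is equivalent to the commit-point formulation: `H` is `k`-atomic
iff each operation can be assigned a distinct commit point strictly inside its
time interval such that, ordering operations by commit point, every read follows
its dictating write with at most `k - 1` other writes in between. -/
theorem stmt_17 (H : History) (hWf : Wf H) (k : ℕ) (hk : 1 ≤ k) :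
    KAtomic k H ↔ ∃ c : Op → ℝ,
      (∀ op ∈ H, op.s < c op ∧ c op < op.f) ∧
      (∀ a ∈ H, ∀ b ∈ H, a ≠ b → c a ≠ c b) ∧
      (∀ r ∈ H, r.isRead = true → ∀ w ∈ H, w.isWrite → w.val = r.val →
        c w < c r ∧
          (H.filter (fun w' => w'.isWrite ∧ c w < c w' ∧ c w' < c r)).card ≤ k - 1) :=
  stmt_17_general H hWf k
end
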